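/- Fix a linear subspace L of the space of symmetric n×n real matrices, symmetric matrices X₀, S₀, and μ > 0, and let L^⊥ denote the orthogonal complement of L with respect to the trace inner product ⟨A,B⟩ = tr(A·B). Let W be symmetric positive definite, T an invertible n×n real matrix, and P := (T·W·Tᵀ)^(-1/2)·T·W^(1/2). Suppose the symmetric matrix D satisfies W^(1/2)·(I + D)·W^(1/2) ∈ (1/√μ)·X₀ + L and W^(-1/2)·(I − D)·W^(-1/2) ∈ (1/√μ)·S₀ + L^⊥. Then the symmetric matrix P·D·Pᵀ satisfies (TWTᵀ)^(1/2)·(I + P·D·Pᵀ)·(TWTᵀ)^(1/2) ∈ (1/√μ)·T·X₀·Tᵀ + T·L·Tᵀ and (TWTᵀ)^(-1/2)·(I − P·D·Pᵀ)·(TWTᵀ)^(-1/2) ∈ (1/√μ)·(Tᵀ)⁻¹·S₀·T⁻¹ + ((Tᵀ)⁻¹·Z·T⁻¹ : Z ∈ L^⊥), where T·L·Tᵀ := {T·Z·Tᵀ : Z ∈ L}. -/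

import Mathlib

/-! Write `V = W^(1/2)` and `U = (T W Tᵀ)^(1/2)`. The definition of `P` says exactly
`U P = T V`, and `U² = T V² Tᵀ`. Hence conjugating `1 + P D Pᵀ` by `U` is the same as
conjugating `V (1 + D) V` by `T`; inverting, `U⁻¹ P = (Tᵀ)⁻¹ V⁻¹`, so conjugating `1 - P D Pᵀ`
by `U⁻¹` is conjugating `V⁻¹ (1 - D) V⁻¹` by `(Tᵀ)⁻¹`. Both Newton equations are thereby
transported, with the same residuals in `L` and `Lp`. -/

open Matrix

open scoped ComplexOrder in
/-- The positive semidefinite square root of a positive semidefinite matrix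
(the definition `Matrix.PosSemidef.sqrt` of the older Mathlib, removed since). -/
noncomputable def Matrix.PosSemidef.sqrt {n 𝕜 : Type*} [Fintype n] [DecidableEq n] [RCLike 𝕜]
    {A : Matrix n n 𝕜} (hA : A.PosSemidef) : Matrix n n 𝕜 :=
  hA.1.eigenvectorUnitary.1 * diagonal ((↑) ∘ (√·) ∘ hA.1.eigenvalues) *
  (star hA.1.eigenvectorUnitary : Matrix n n 𝕜)

namespace Matrix

section Sqrt

open scoped ComplexOrder

variable {n 𝕜 : Type*} [Fintype n] [DecidableEq n] [RCLike 𝕜] {A : Matrix n n 𝕜}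

theorem PosSemidef.posSemidef_sqrt (hA : A.PosSemidef) : hA.sqrt.PosSemidef := by
  have hd : (diagonal ((↑) ∘ (√·) ∘ hA.1.eigenvalues) : Matrix n n 𝕜).PosSemidef :=
    posSemidef_diagonal_iff.mpr fun i => by simp [Real.sqrt_nonneg]
  simpa [PosSemidef.sqrt, star_eq_conjTranspose] using
    hd.mul_mul_conjTranspose_same (hA.1.eigenvectorUnitary : Matrix n n 𝕜)

theorem PosSemidef.sqrt_mul_self (hA : A.PosSemidef) : hA.sqrt * hA.sqrt = A := by
  set E : Matrix n n 𝕜 := hA.1.eigenvectorUnitary.1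
  set R : Matrix n n 𝕜 := diagonal ((↑) ∘ (√·) ∘ hA.1.eigenvalues)
  have hE : star E * E = 1 := Unitary.coe_star_mul_self _
  have hR : R * R = diagonal (RCLike.ofReal ∘ hA.1.eigenvalues) := by
    rw [diagonal_mul_diagonal]
    congr 1
    funext i
    simp only [Function.comp_apply]
    rw [← RCLike.ofReal_mul, Real.mul_self_sqrt (hA.eigenvalues_nonneg i)]
  conv_rhs => rw [hA.1.spectral_theorem, Unitary.conjStarAlgAut_apply]
  calc hA.sqrt * hA.sqrt = E * (R * (star E * E) * R) * star E := by
        simp only [PosSemidef.sqrt, E, R, Matrix.mul_assoc]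
    _ = _ := by rw [hE, Matrix.mul_one, hR]

theorem PosDef.isUnit_det_sqrt (hA : A.PosDef) : IsUnit hA.posSemidef.sqrt.det := by
  have h : IsUnit (hA.posSemidef.sqrt * hA.posSemidef.sqrt).det := by
    rw [hA.posSemidef.sqrt_mul_self, ← isUnit_iff_isUnit_det]
    exact hA.isUnit
  rw [det_mul] at h
  exact isUnit_of_mul_isUnit_left h

end Sqrt

theorem PosSemidef.transpose_sqrt {n : Type*} [Fintype n] [DecidableEq n]
    {A : Matrix n n ℝ} (hA : A.PosSemidef) : hA.sqrtᵀ = hA.sqrt :=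
  hA.posSemidef_sqrt.isHermitian

section Congruence

variable {n R : Type*} [Fintype n] [CommRing R]

theorem mul_mul_eq_smul_add_mul_sub_smul_mul (M A X N : Matrix n n R) (c : R) :
    M * A * N = c • (M * X * N) + M * (A - c • X) * N := by
  rw [Matrix.mul_sub, Matrix.sub_mul, Matrix.mul_smul, Matrix.smul_mul]
  abel

variable [DecidableEq n] {U V T P : Matrix n n R}

theorem mul_one_add_mul_mul_transpose_mul (hU : Uᵀ = U) (hV : Vᵀ = V)
    (hUU : U * U = T * (V * V) * Tᵀ) (hUP : U * P = T * V) (D : Matrix n n R) :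
    U * (1 + P * D * Pᵀ) * U = T * (V * (1 + D) * V) * Tᵀ := by
  have hPU : Pᵀ * U = V * Tᵀ := by
    rw [← hU, ← transpose_mul, hUP, transpose_mul, hV]
  calc U * (1 + P * D * Pᵀ) * U = U * U + (U * P) * D * (Pᵀ * U) := by noncomm_ring
    _ = T * (V * (1 + D) * V) * Tᵀ := by rw [hUU, hUP, hPU]; noncomm_ring

theorem inv_mul_one_sub_mul_mul_transpose_mul_inv (hTdet : IsUnit T.det) (hVdet : IsUnit V.det)
    (hU : Uᵀ = U) (hV : Vᵀ = V) (hUU : U * U = T * (V * V) * Tᵀ) (hUP : U * P = T * V)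
    (D : Matrix n n R) :
    U⁻¹ * (1 - P * D * Pᵀ) * U⁻¹ = (Tᵀ)⁻¹ * (V⁻¹ * (1 - D) * V⁻¹) * T⁻¹ := by
  have hUdet : IsUnit U.det := by
    have h : IsUnit (U * U).det := by
      rw [hUU, det_mul, det_mul, det_mul, det_transpose]
      exact (hTdet.mul (hVdet.mul hVdet)).mul hTdet
    rw [det_mul] at h
    exact isUnit_of_mul_isUnit_left h
  have hUU' : U⁻¹ * U⁻¹ = (Tᵀ)⁻¹ * (V⁻¹ * V⁻¹) * (Tᵀ)⁻¹ᵀ := by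
    rw [← Matrix.mul_inv_rev, hUU, transpose_nonsing_inv, transpose_transpose,
      Matrix.mul_inv_rev, Matrix.mul_inv_rev, Matrix.mul_inv_rev]
    simp only [Matrix.mul_assoc]
  have hUP' : U⁻¹ * P = (Tᵀ)⁻¹ * V⁻¹ := by
    calc U⁻¹ * P = U⁻¹ * U⁻¹ * (U * P) := by
          rw [Matrix.mul_assoc, ← Matrix.mul_assoc U⁻¹ U, nonsing_inv_mul _ hUdet, Matrix.one_mul]
      _ = (Tᵀ)⁻¹ * V⁻¹ * (V⁻¹ * (T⁻¹ * T) * V) := by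
          rw [hUU', hUP, transpose_nonsing_inv, transpose_transpose]; simp only [Matrix.mul_assoc]
      _ = (Tᵀ)⁻¹ * V⁻¹ := by
          rw [nonsing_inv_mul _ hTdet, Matrix.mul_one, nonsing_inv_mul _ hVdet, Matrix.mul_one]
  have h := mul_one_add_mul_mul_transpose_mul (by rw [transpose_nonsing_inv, hU])
    (by rw [transpose_nonsing_inv, hV]) hUU' hUP' (-D)
  rwa [transpose_nonsing_inv, transpose_transpose, Matrix.mul_neg, Matrix.neg_mul,
    ← sub_eq_add_neg, ← sub_eq_add_neg] at h

end Congruence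

end Matrix

theorem newton_direction_scale_invariance_general
    (n : ℕ)
    (L : Submodule ℝ (Matrix (Fin n) (Fin n) ℝ))
    (Lp : Submodule ℝ (Matrix (Fin n) (Fin n) ℝ))
    (X₀ S₀ : Matrix (Fin n) (Fin n) ℝ)
    (μ : ℝ)
    (W T : Matrix (Fin n) (Fin n) ℝ) (hW : W.PosDef) (hT : IsUnit T.det)
    (hTWT : (T * W * Tᵀ).PosDef)
    (P : Matrix (Fin n) (Fin n) ℝ)
    (hP : P = (hTWT.posSemidef.sqrt)⁻¹ * T * hW.posSemidef.sqrt)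
    (D : Matrix (Fin n) (Fin n) ℝ)
    (hD1 : hW.posSemidef.sqrt * (1 + D) * hW.posSemidef.sqrt
            - (1 / Real.sqrt μ) • X₀ ∈ L)
    (hD2 : (hW.posSemidef.sqrt)⁻¹ * (1 - D) * (hW.posSemidef.sqrt)⁻¹
            - (1 / Real.sqrt μ) • S₀ ∈ Lp) :
    (∃ Z ∈ L,
      hTWT.posSemidef.sqrt * (1 + P * D * Pᵀ) * hTWT.posSemidef.sqrt =
        (1 / Real.sqrt μ) • (T * X₀ * Tᵀ) + T * Z * Tᵀ) ∧
    (∃ Z ∈ Lp,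
      (hTWT.posSemidef.sqrt)⁻¹ * (1 - P * D * Pᵀ) * (hTWT.posSemidef.sqrt)⁻¹ =
        (1 / Real.sqrt μ) • ((Tᵀ)⁻¹ * S₀ * T⁻¹) + (Tᵀ)⁻¹ * Z * T⁻¹) := by
  have hUU : hTWT.posSemidef.sqrt * hTWT.posSemidef.sqrt =
      T * (hW.posSemidef.sqrt * hW.posSemidef.sqrt) * Tᵀ := by
    rw [hW.posSemidef.sqrt_mul_self, hTWT.posSemidef.sqrt_mul_self]
  have hUP : hTWT.posSemidef.sqrt * P = T * hW.posSemidef.sqrt := by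
    rw [hP, ← Matrix.mul_assoc, ← Matrix.mul_assoc, mul_nonsing_inv _ hTWT.isUnit_det_sqrt,
      Matrix.one_mul]
  refine ⟨⟨_, hD1, ?_⟩, ⟨_, hD2, ?_⟩⟩
  · rw [mul_one_add_mul_mul_transpose_mul hTWT.posSemidef.transpose_sqrt
      hW.posSemidef.transpose_sqrt hUU hUP, ← mul_mul_eq_smul_add_mul_sub_smul_mul]
  · rw [inv_mul_one_sub_mul_mul_transpose_mul_inv hT hW.isUnit_det_sqrt
      hTWT.posSemidef.transpose_sqrt hW.posSemidef.transpose_sqrt hUU hUP,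
      ← mul_mul_eq_smul_add_mul_sub_smul_mul]

/-- Equivariance of the Newton direction under cone automorphisms
(semidefinite instance): if `D` is the Newton direction at `(W, μ)` for data
`(L, X₀, S₀)` and `P = (T W Tᵀ)^(-1/2) T W^(1/2)`, then `P D Pᵀ` is the Newton
direction at `(T W Tᵀ, μ)` for the transformed data
`(T L Tᵀ, T X₀ Tᵀ, (Tᵀ)⁻¹ S₀ T⁻¹)`. -/
theorem newton_direction_scale_invariance
    (n : ℕ) (hn : 1 ≤ n)
    (L : Submodule ℝ (Matrix (Fin n) (Fin n) ℝ))
    (hL : ∀ A ∈ L, A.IsHermitian)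
    (Lp : Submodule ℝ (Matrix (Fin n) (Fin n) ℝ))
    (hLp : ∀ B, B ∈ Lp ↔ (B.IsHermitian ∧ ∀ A ∈ L, (A * B).trace = 0))
    (X₀ S₀ : Matrix (Fin n) (Fin n) ℝ) (hX₀ : X₀.IsHermitian) (hS₀ : S₀.IsHermitian)
    (μ : ℝ) (hμ : 0 < μ)
    (W T : Matrix (Fin n) (Fin n) ℝ) (hW : W.PosDef) (hT : IsUnit T.det)
    (hTWT : (T * W * Tᵀ).PosDef)
    (P : Matrix (Fin n) (Fin n) ℝ)
    (hP : P = (hTWT.posSemidef.sqrt)⁻¹ * T * hW.posSemidef.sqrt)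
    (D : Matrix (Fin n) (Fin n) ℝ) (hD : D.IsHermitian)
    (hD1 : hW.posSemidef.sqrt * (1 + D) * hW.posSemidef.sqrt
            - (1 / Real.sqrt μ) • X₀ ∈ L)
    (hD2 : (hW.posSemidef.sqrt)⁻¹ * (1 - D) * (hW.posSemidef.sqrt)⁻¹
            - (1 / Real.sqrt μ) • S₀ ∈ Lp) :
    (∃ Z ∈ L,
      hTWT.posSemidef.sqrt * (1 + P * D * Pᵀ) * hTWT.posSemidef.sqrt =
        (1 / Real.sqrt μ) • (T * X₀ * Tᵀ) + T * Z * Tᵀ) ∧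
    (∃ Z ∈ Lp,
      (hTWT.posSemidef.sqrt)⁻¹ * (1 - P * D * Pᵀ) * (hTWT.posSemidef.sqrt)⁻¹ =
        (1 / Real.sqrt μ) • ((Tᵀ)⁻¹ * S₀ * T⁻¹) + (Tᵀ)⁻¹ * Z * T⁻¹) :=
  newton_direction_scale_invariance_general n L Lp X₀ S₀ μ W T hW hT hTWT P hP D hD1 hD2
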